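/- Let (λ_m)_{m≥0} be a sequence in [0,5] satisfying λ_m = λ_{m+1}(5 − λ_{m+1}) for all m ≥ 0 (equivalently, λ_{m+1} = S_{ε_m}(λ_m) for some choice of signs ε_m ∈ {−1,+1}). Then the limit lim_{m→∞} 5^m·λ_m exists and is finite if and only if there exists M such that for all m ≥ M one has λ_{m+1} = S₋₁(λ_m) (equivalently, λ_{m+1} ≤ 5/2 for all m ≥ M). -/
import Mathlib


open Set Filter

/-- The two inverse branches of the decimation polynomial `R(x) = x(5-x)`
associated to the Sierpiński triangle. -/
noncomputable def S (ε : ℝ) (x : ℝ) : ℝ := (5 + ε * Real.sqrt (25 - 4 * x)) / 2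

lemma branch_neg_eq {x y : ℝ} (hy0 : 0 ≤ y) (hy : y ≤ 5/2) (hxy : x = y * (5 - y)) :
    S (-1) x = y := by
  have h25 : 25 - 4 * x = (5 - 2*y)^2 := by rw [hxy]; ring
  unfold S
  rw [h25, Real.sqrt_sq (by linarith)]
  ring

lemma branch_neg_le {x : ℝ} : S (-1) x ≤ 5/2 := by
  unfold S
  have := Real.sqrt_nonneg (25 - 4 * x)
  linarith

theorem stmt_13 (lam : ℕ → ℝ) (hmem : ∀ m, lam m ∈ Set.Icc (0:ℝ) 5)
    (hrec : ∀ m, lam m = lam (m + 1) * (5 - lam (m + 1))) :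
    (∃ L : ℝ, Tendsto (fun m : ℕ => (5:ℝ) ^ m * lam m) atTop (nhds L)) ↔
    (∃ M : ℕ, ∀ m ≥ M, lam (m + 1) = S (-1) (lam m)) := by
  constructor
  · rintro ⟨L, hL⟩
    -- lam m → 0
    have hlam0 : Tendsto lam atTop (nhds 0) := by
      have h1 : Tendsto (fun m : ℕ => ((1:ℝ)/5) ^ m * ((5:ℝ) ^ m * lam m)) atTop
          (nhds (0 * L)) := by
        exact (tendsto_pow_atTop_nhds_zero_of_lt_one (by norm_num) (by norm_num)).mul hL
      have h2 : (fun m : ℕ => ((1:ℝ)/5) ^ m * ((5:ℝ) ^ m * lam m)) = lam := by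
        funext m
        have : ((1:ℝ)/5) ^ m * (5:ℝ) ^ m = 1 := by
          rw [← mul_pow]; norm_num
        rw [← mul_assoc, this, one_mul]
      rwa [h2, zero_mul] at h1
    have hev : ∀ᶠ m in atTop, lam m < 1/2 :=
      hlam0.eventually (gt_mem_nhds (by norm_num : (0:ℝ) < 1/2))
    obtain ⟨M, hM⟩ := hev.exists_forall_of_atTop
    refine ⟨M, fun m hm => ?_⟩
    have h1 : lam (m+1) < 1/2 := hM (m+1) (by omega)
    exact (branch_neg_eq (hmem (m+1)).1 (by linarith) (hrec m)).symm
  · rintro ⟨M, hM⟩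
    have hle : ∀ m ≥ M, lam (m+1) ≤ 5/2 := fun m hm => by
      rw [hM m hm]; exact branch_neg_le
    -- decay
    have hdecay : ∀ j : ℕ, lam (M + j) ≤ 5 * (2/5)^j := by
      intro j
      induction j with
      | zero => simpa using (hmem M).2
      | succ j ih =>
        have h1 : lam (M + j + 1) ≤ 5/2 := hle (M + j) (by omega)
        have h2 := hrec (M + j)
        have h0 : 0 ≤ lam (M + j + 1) := (hmem (M + j + 1)).1
        have h3 : (5/2) * lam (M + j + 1) ≤ lam (M + j) := by nlinarith
        have : lam (M + (j+1)) ≤ (2/5) * lam (M + j) := by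
          have : lam (M + (j+1)) = lam (M + j + 1) := by ring_nf
          rw [this]; linarith
        calc lam (M + (j+1)) ≤ (2/5) * lam (M + j) := this
          _ ≤ (2/5) * (5 * (2/5)^j) := by
              have h25 : (0:ℝ) ≤ 2/5 := by norm_num
              exact mul_le_mul_of_nonneg_left ih h25
          _ = 5 * (2/5)^(j+1) := by ring
    set d : ℕ → ℝ := fun k => (5:ℝ)^k * (lam (k+1))^2 with hd
    have hdnonneg : ∀ k, 0 ≤ d k := fun k =>
      mul_nonneg (by positivity) (sq_nonneg _)
    have hsum_eq : ∀ m : ℕ, (5:ℝ)^m * lam m = lam 0 + ∑ k ∈ Finset.range m, d k := by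
      intro m
      induction m with
      | zero => simp
      | succ m ih =>
        rw [Finset.sum_range_succ, ← add_assoc, ← ih]
        have := hrec m
        simp only [hd]
        rw [this]
        ring
    -- summability of d
    have hdbd : ∀ j : ℕ, d (M + j) ≤ (4 * 5^M) * (4/5)^j := by
      intro j
      have h1 : lam (M + j + 1) ≤ 5 * (2/5)^(j+1) := by
        have := hdecay (j+1)
        have e : M + (j+1) = M + j + 1 := by ring
        rwa [e] at this
      have h0 : 0 ≤ lam (M + j + 1) := (hmem (M + j + 1)).1
      have hsq : (lam (M + j + 1))^2 ≤ (5 * (2/5)^(j+1))^2 := by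
        apply pow_le_pow_left₀ h0 h1
      have hp : (0:ℝ) < 5 ^ (M + j) := by positivity
      calc d (M + j) = (5:ℝ)^(M+j) * (lam (M + j + 1))^2 := rfl
        _ ≤ (5:ℝ)^(M+j) * (5 * (2/5)^(j+1))^2 := by
            exact mul_le_mul_of_nonneg_left hsq (le_of_lt hp)
        _ = (4 * 5^M) * (4/5)^j := by
            have h45 : ((4:ℝ)/5)^j = 5^j * (4/25)^j := by
              rw [← mul_pow]; norm_num
            have h2 : ((2:ℝ)/5)^(j+1) * ((2:ℝ)/5)^(j+1) = ((4:ℝ)/25)^(j+1) := by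
              rw [← mul_pow]; norm_num
            have h3 : (5 * ((2:ℝ)/5)^(j+1))^2 = 25 * ((4:ℝ)/25)^(j+1) := by
              rw [mul_pow, ← h2]; ring
            rw [pow_add, h3, pow_succ, h45]
            ring
    have hsummable : Summable d := by
      have hgeo : Summable (fun j : ℕ => (4 * (5:ℝ)^M) * (4/5)^j) :=
        (summable_geometric_of_lt_one (by norm_num) (by norm_num)).mul_left _
      have h1 : Summable (fun j : ℕ => d (j + M)) := by
        apply Summable.of_nonneg_of_le (fun j => hdnonneg _) (fun j => ?_) hgeo
        have := hdbd j
        rwa [add_comm M j] at this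
      exact (summable_nat_add_iff M).mp h1
    refine ⟨lam 0 + ∑' k, d k, ?_⟩
    have htend : Tendsto (fun m => ∑ k ∈ Finset.range m, d k) atTop (nhds (∑' k, d k)) :=
      hsummable.hasSum.tendsto_sum_nat
    have : Tendsto (fun m => lam 0 + ∑ k ∈ Finset.range m, d k) atTop
        (nhds (lam 0 + ∑' k, d k)) := tendsto_const_nhds.add htend
    apply this.congr
    intro m
    exact (hsum_eq m).symm
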